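/- arXiv:1503.07803 — 2 statements merged into one kernel-verified Lean document; each statement's English description precedes it below -/
import Mathlib

section
/- Let D : V₁ × V₂ → W₁ × W₂ be a linear map of real vector spaces with block components D_{ij} : V_j → W_i, suppose D₁₁ : V₁ → W₁ is bijective, and let S = D₂₂ − D₂₁ ∘ D₁₁⁻¹ ∘ D₁₂ : V₂ → W₂ be the Schur complement. Then the map W₂ → (W₁ × W₂)/range(D) sending w to the class of (0, w) descends to a well-defined linear equivalence from coker(S) = W₂ / range(S) onto coker(D) = (W₁ × W₂) / range(D). -/
variable {V₁ V₂ W₁ W₂ : Type*}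
  [AddCommGroup V₁] [Module ℝ V₁] [AddCommGroup V₂] [Module ℝ V₂]
  [AddCommGroup W₁] [Module ℝ W₁] [AddCommGroup W₂] [Module ℝ W₂]

/-- The block component `D₁₁ = π₁ ∘ D ∘ ι₁` of a linear map `D : V₁ × V₂ → W₁ × W₂`. -/
def blockD11 (D : (V₁ × V₂) →ₗ[ℝ] (W₁ × W₂)) : V₁ →ₗ[ℝ] W₁ :=
  (LinearMap.fst ℝ W₁ W₂) ∘ₗ D ∘ₗ (LinearMap.inl ℝ V₁ V₂)

/-- The block component `D₁₂ = π₁ ∘ D ∘ ι₂`. -/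
def blockD12 (D : (V₁ × V₂) →ₗ[ℝ] (W₁ × W₂)) : V₂ →ₗ[ℝ] W₁ :=
  (LinearMap.fst ℝ W₁ W₂) ∘ₗ D ∘ₗ (LinearMap.inr ℝ V₁ V₂)

/-- The block component `D₂₁ = π₂ ∘ D ∘ ι₁`. -/
def blockD21 (D : (V₁ × V₂) →ₗ[ℝ] (W₁ × W₂)) : V₁ →ₗ[ℝ] W₂ :=
  (LinearMap.snd ℝ W₁ W₂) ∘ₗ D ∘ₗ (LinearMap.inl ℝ V₁ V₂)

/-- The block component `D₂₂ = π₂ ∘ D ∘ ι₂`. -/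
def blockD22 (D : (V₁ × V₂) →ₗ[ℝ] (W₁ × W₂)) : V₂ →ₗ[ℝ] W₂ :=
  (LinearMap.snd ℝ W₁ W₂) ∘ₗ D ∘ₗ (LinearMap.inr ℝ V₁ V₂)

/-- The Schur complement (reduced operator) `S = D₂₂ − D₂₁ ∘ D₁₁⁻¹ ∘ D₁₂`, where `D11inv`
plays the role of `D₁₁⁻¹`. -/
def schurComplement (D : (V₁ × V₂) →ₗ[ℝ] (W₁ × W₂)) (D11inv : W₁ →ₗ[ℝ] V₁) :
    V₂ →ₗ[ℝ] W₂ :=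
  blockD22 D - (blockD21 D) ∘ₗ D11inv ∘ₗ (blockD12 D)

lemma D_apply (D : (V₁ × V₂) →ₗ[ℝ] (W₁ × W₂)) (v₁ : V₁) (v₂ : V₂) :
    D (v₁, v₂) = (blockD11 D v₁ + blockD12 D v₂, blockD21 D v₁ + blockD22 D v₂) := by
  have : (v₁, v₂) = ((v₁, 0) : V₁ × V₂) + (0, v₂) := by simp
  rw [this, map_add]
  simp [blockD11, blockD12, blockD21, blockD22, Prod.ext_iff]

/-- If `D₁₁` is bijective with inverse `D11inv`, then `w ↦ [(0,w)]` descends to a linear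
equivalence from the cokernel of the Schur complement onto the cokernel of `D`. -/
theorem coker_schurComplement_equiv_coker (D : (V₁ × V₂) →ₗ[ℝ] (W₁ × W₂))
    (D11inv : W₁ →ₗ[ℝ] V₁)
    (hbij : Function.Bijective (blockD11 D))
    (hleft : ∀ v : V₁, D11inv (blockD11 D v) = v)
    (hright : ∀ w : W₁, blockD11 D (D11inv w) = w) :
    ∃ e : (W₂ ⧸ LinearMap.range (schurComplement D D11inv)) ≃ₗ[ℝ]
        ((W₁ × W₂) ⧸ LinearMap.range D),
      ∀ w : W₂,
        e (Submodule.Quotient.mk w) = Submodule.Quotient.mk ((0 : W₁), w) := by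
  set S := schurComplement D D11inv with hS
  -- forward map
  set F : W₂ →ₗ[ℝ] (W₁ × W₂) ⧸ LinearMap.range D :=
    (LinearMap.range D).mkQ ∘ₗ LinearMap.inr ℝ W₁ W₂ with hF
  have hFker : LinearMap.range S ≤ LinearMap.ker F := by
    rintro _ ⟨v, rfl⟩
    have : ((0 : W₁), S v) = D (-(D11inv (blockD12 D v)), v) := by
      rw [D_apply]
      simp [hS, schurComplement, Prod.ext_iff, hright]
      abel
    simp only [hF, LinearMap.mem_ker, LinearMap.comp_apply, LinearMap.inr_apply,
      Submodule.mkQ_apply, Submodule.Quotient.mk_eq_zero, this]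
    exact LinearMap.mem_range_self D _
  -- backward map
  set G : (W₁ × W₂) →ₗ[ℝ] W₂ ⧸ LinearMap.range S :=
    (LinearMap.range S).mkQ ∘ₗ
      (LinearMap.snd ℝ W₁ W₂ - blockD21 D ∘ₗ D11inv ∘ₗ LinearMap.fst ℝ W₁ W₂) with hG
  have hGker : LinearMap.range D ≤ LinearMap.ker G := by
    rintro _ ⟨⟨v₁, v₂⟩, rfl⟩
    simp only [hG, LinearMap.mem_ker, LinearMap.comp_apply, Submodule.mkQ_apply,
      Submodule.Quotient.mk_eq_zero, LinearMap.sub_apply, LinearMap.snd_apply,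
      LinearMap.fst_apply, D_apply, map_add, hleft]
    refine ⟨v₂, ?_⟩
    simp [hS, schurComplement]
  refine ⟨LinearEquiv.ofLinear
      ((LinearMap.range S).liftQ F hFker) ((LinearMap.range D).liftQ G hGker) ?_ ?_, ?_⟩
  · ext w
    · simp only [LinearMap.comp_apply, Submodule.mkQ_apply, Submodule.liftQ_apply, hG, hF,
        LinearMap.id_apply, LinearMap.sub_apply, LinearMap.snd_apply, LinearMap.fst_apply,
        LinearMap.inr_apply, LinearMap.inl_apply, LinearMap.coe_comp, Function.comp_apply,
        map_zero, sub_zero, map_sub]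
      rw [zero_sub, ← Submodule.Quotient.mk_neg, Submodule.Quotient.eq]
      refine ⟨(-(D11inv w), 0), ?_⟩
      rw [D_apply]
      simp [Prod.ext_iff, hright]
    · simp only [LinearMap.comp_apply, Submodule.mkQ_apply, Submodule.liftQ_apply, hG, hF,
        LinearMap.id_apply, LinearMap.sub_apply, LinearMap.snd_apply, LinearMap.fst_apply,
        LinearMap.inr_apply, LinearMap.coe_comp, Function.comp_apply, map_zero, sub_zero]
  · ext w
    simp [hF, hG, Submodule.Quotient.eq]
  · intro w
    simp [hF]
end

section
/- Let D : V₁ × V₂ → W₁ × W₂ be a linear map of real vector spaces with block components D_{ij} : V_j → W_i, suppose D₁₁ : V₁ → W₁ is bijective, and let S = D₂₂ − D₂₁ ∘ D₁₁⁻¹ ∘ D₁₂ : V₂ → W₂ be the Schur complement. Then the five-term sequence 0 → ker(D) → V₂ → W₂ → coker(D) → 0 is exact, where the map ker(D) → V₂ is the restriction to ker(D) of the projection V₁ × V₂ → V₂, the map V₂ → W₂ is S, and the map W₂ → coker(D) = (W₁ × W₂)/range(D) sends w to the class of (0, w). -/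
variable {V₁ V₂ W₁ W₂ : Type*}
  [AddCommGroup V₁] [Module ℝ V₁] [AddCommGroup V₂] [Module ℝ V₂]
  [AddCommGroup W₁] [Module ℝ W₁] [AddCommGroup W₂] [Module ℝ W₂]

/-- If `D₁₁` is bijective with inverse `D11inv`, the five-term sequence
`0 → ker D → V₂ → W₂ → coker D → 0` is exact, where `ker D → V₂` is (the restriction of)
the second projection, `V₂ → W₂` is the Schur complement, and `W₂ → coker D` sends `w`
to the class of `(0, w)`. -/
theorem schurComplement_five_term_exact (D : (V₁ × V₂) →ₗ[ℝ] (W₁ × W₂))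
    (D11inv : W₁ →ₗ[ℝ] V₁)
    (hbij : Function.Bijective (blockD11 D))
    (hleft : ∀ v : V₁, D11inv (blockD11 D v) = v)
    (hright : ∀ w : W₁, blockD11 D (D11inv w) = w) :
    Function.Injective ((LinearMap.snd ℝ V₁ V₂) ∘ₗ (LinearMap.ker D).subtype) ∧
    LinearMap.range ((LinearMap.snd ℝ V₁ V₂) ∘ₗ (LinearMap.ker D).subtype)
      = LinearMap.ker (schurComplement D D11inv) ∧
    LinearMap.range (schurComplement D D11inv)
      = LinearMap.ker ((LinearMap.range D).mkQ ∘ₗ (LinearMap.inr ℝ W₁ W₂)) ∧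
    Function.Surjective ((LinearMap.range D).mkQ ∘ₗ (LinearMap.inr ℝ W₁ W₂)) := by
  have hD : ∀ (v₁ : V₁) (v₂ : V₂), D (v₁, v₂) =
      (blockD11 D v₁ + blockD12 D v₂, blockD21 D v₁ + blockD22 D v₂) := by
    intro v₁ v₂
    have h : (v₁, v₂) = ((v₁, 0) : V₁ × V₂) + (0, v₂) := by simp
    rw [h, map_add]
    simp [blockD11, blockD12, blockD21, blockD22, Prod.ext_iff]
  refine ⟨?_, ?_, ?_, ?_⟩
  · intro ⟨⟨v₁, v₂⟩, hv⟩ ⟨⟨u₁, u₂⟩, hu⟩ h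
    simp only [LinearMap.coe_comp, Function.comp_apply, Submodule.coe_subtype,
      LinearMap.snd_apply] at h
    subst h
    have hv' := LinearMap.mem_ker.mp hv
    have hu' := LinearMap.mem_ker.mp hu
    rw [hD] at hv' hu'
    have h1 : blockD11 D v₁ + blockD12 D v₂ = 0 := by
      simpa [Prod.ext_iff] using congrArg Prod.fst hv'
    have h2 : blockD11 D u₁ + blockD12 D v₂ = 0 := by
      simpa [Prod.ext_iff] using congrArg Prod.fst hu'
    have : blockD11 D v₁ = blockD11 D u₁ :=
      (eq_neg_of_add_eq_zero_left h1).trans (eq_neg_of_add_eq_zero_left h2).symm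
    have : v₁ = u₁ := hbij.1 this
    simp [this]
  · ext v₂
    simp only [LinearMap.mem_range, LinearMap.mem_ker, LinearMap.coe_comp,
      Function.comp_apply, Submodule.coe_subtype, LinearMap.snd_apply]
    constructor
    · rintro ⟨⟨⟨v₁, u₂⟩, hv⟩, rfl⟩
      have hv' := LinearMap.mem_ker.mp hv
      rw [hD] at hv'
      have h1 : blockD11 D v₁ + blockD12 D u₂ = 0 := by
        simpa [Prod.ext_iff] using congrArg Prod.fst hv'
      have h2 : blockD21 D v₁ + blockD22 D u₂ = 0 := by
        simpa [Prod.ext_iff] using congrArg Prod.snd hv'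
      have hv1 : v₁ = -D11inv (blockD12 D u₂) := by
        have := congrArg D11inv h1
        simp only [map_add, hleft, map_zero] at this
        exact eq_neg_of_add_eq_zero_left this
      simp only [schurComplement, LinearMap.sub_apply, LinearMap.coe_comp,
        Function.comp_apply]
      rw [hv1] at h2
      simp only [map_neg, neg_add_eq_sub] at h2
      exact h2
    · intro hS
      refine ⟨⟨(-D11inv (blockD12 D v₂), v₂), ?_⟩, rfl⟩
      rw [LinearMap.mem_ker, hD]
      simp only [schurComplement, LinearMap.sub_apply, LinearMap.coe_comp,
        Function.comp_apply] at hS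
      simp only [map_neg, hright, Prod.mk_eq_zero]
      constructor
      · abel
      · rw [neg_add_eq_sub]; exact hS
  · ext w
    simp only [LinearMap.mem_range, LinearMap.mem_ker, LinearMap.coe_comp,
      Function.comp_apply, LinearMap.inr_apply, Submodule.mkQ_apply,
      Submodule.Quotient.mk_eq_zero, LinearMap.mem_range]
    constructor
    · rintro ⟨v₂, rfl⟩
      refine ⟨(-D11inv (blockD12 D v₂), v₂), ?_⟩
      rw [hD]
      simp only [schurComplement, LinearMap.sub_apply, LinearMap.coe_comp,
        Function.comp_apply, map_neg, hright, Prod.ext_iff]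
      constructor
      · abel
      · abel
    · rintro ⟨⟨v₁, v₂⟩, hv⟩
      rw [hD] at hv
      have h1 : blockD11 D v₁ + blockD12 D v₂ = 0 := by
        simpa [Prod.ext_iff] using congrArg Prod.fst hv
      have h2 : blockD21 D v₁ + blockD22 D v₂ = w := by
        simpa [Prod.ext_iff] using congrArg Prod.snd hv
      refine ⟨v₂, ?_⟩
      have hv1 : v₁ = -D11inv (blockD12 D v₂) := by
        have := congrArg D11inv h1
        simp only [map_add, hleft, map_zero] at this
        exact eq_neg_of_add_eq_zero_left this
      rw [hv1] at h2
      simp only [map_neg, neg_add_eq_sub] at h2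
      simpa only [schurComplement, LinearMap.sub_apply, LinearMap.coe_comp,
        Function.comp_apply] using h2
  · rintro q
    obtain ⟨⟨w₁, w₂⟩, rfl⟩ := Submodule.mkQ_surjective _ q
    refine ⟨w₂ - blockD21 D (D11inv w₁), ?_⟩
    simp only [LinearMap.coe_comp, Function.comp_apply, LinearMap.inr_apply,
      Submodule.mkQ_apply]
    rw [Submodule.Quotient.eq]
    refine ⟨(-(D11inv w₁), 0), ?_⟩
    rw [hD]
    simp [Prod.ext_iff, hright]
end
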